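/- arXiv:1704.06785 — 2 statements merged into one kernel-verified Lean document; each statement's English description precedes it below -/
import Mathlib

section
/- For integers N, K, T with K ≥ 2, T ≥ 2, and T + K ≤ N, the strict inequality 1 − C(N−T,K)/C(N,K) > (T + K − 1)/N holds. -/
/-!
Write `M = N - T`. Clearing denominators, the inequality says
`N · C(M, K) < (M + 1 - K) · C(N, K)`. Using `K · C(M, K) = (M + 1 - K) · C(M, K - 1)` and
`K · C(N, K) = N · C(N - 1, K - 1)`, this reduces to `C(M, K - 1) < C(N - 1, K - 1)`, which is
strict monotonicity of `n ↦ C(n, k)` for `0 < k`, as `M < N - 1`.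
-/

namespace Nat

theorem choose_lt_choose {m n k : ℕ} (hk : 0 < k) (hkm : k ≤ m) (hmn : m < n) :
    m.choose k < n.choose k := by
  obtain ⟨j, rfl⟩ : ∃ j, k = j + 1 := ⟨k - 1, by omega⟩
  calc m.choose (j + 1)
      < m.choose j + m.choose (j + 1) := Nat.lt_add_of_pos_left (choose_pos (by omega))
    _ = (m + 1).choose (j + 1) := (choose_succ_succ m j).symm
    _ ≤ n.choose (j + 1) := choose_le_choose _ hmn

theorem mul_choose_lt_mul_choose {M N K : ℕ} (hK : 2 ≤ K) (hKM : K ≤ M) (hMN : M + 2 ≤ N) :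
    N * M.choose K < (M + 1 - K) * N.choose K := by
  obtain ⟨k, rfl⟩ : ∃ k, K = k + 1 := ⟨K - 1, by omega⟩
  obtain ⟨n, rfl⟩ : ∃ n, N = n + 1 := ⟨N - 1, by omega⟩
  have hsmaller : M.choose k < n.choose k := choose_lt_choose (by omega) (by omega) (by omega)
  rw [show M + 1 - (k + 1) = M - k by omega]
  refine Nat.lt_of_mul_lt_mul_right (a := k + 1) ?_
  calc (n + 1) * M.choose (k + 1) * (k + 1)
      = (n + 1) * (M - k) * M.choose k := by rw [mul_assoc, choose_succ_right_eq]; ring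
    _ < (n + 1) * (M - k) * n.choose k :=
        Nat.mul_lt_mul_of_pos_left hsmaller (Nat.mul_pos (by omega) (by omega))
    _ = (M - k) * (n + 1).choose (k + 1) * (k + 1) := by
        rw [mul_assoc (M - k), ← add_one_mul_choose_eq]; ring

end Nat

theorem stmt_8 (N K T : ℕ) (hK : 2 ≤ K) (hT : 2 ≤ T) (hTK : T + K ≤ N) :
    1 - ((N - T).choose K : ℝ) / (N.choose K) > ((T : ℝ) + K - 1) / N := by
  have hkey : (N : ℝ) * (N - T).choose K < ((N : ℝ) - T + 1 - K) * N.choose K := by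
    have h := Nat.mul_choose_lt_mul_choose (M := N - T) (N := N) hK (by omega) (by omega)
    rw [← Nat.cast_lt (α := ℝ)] at h
    push_cast [Nat.cast_sub (by omega : K ≤ N - T + 1), Nat.cast_sub (by omega : T ≤ N)] at h
    exact h
  have hC : (0 : ℝ) < N.choose K := by exact_mod_cast Nat.choose_pos (by omega)
  have hN : (0 : ℝ) < N := by exact_mod_cast (by omega : 0 < N)
  rw [gt_iff_lt, one_sub_div hC.ne', div_lt_div_iff₀ hN hC]
  linarith
end

section
/- For integers N, K, T with K ≥ 2, T ≥ 2 and T + K ≤ N, the strict inequality (N − K − T + 1)/N > C(N−T,K)/C(N,K) holds. -/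
/-!
Write `n = N - T` and cross-multiply. After multiplying by `K`, the identities
`C(N, K) * K = N * C(N - 1, K - 1)` and `C(n, K) * K = (n + 1 - K) * C(n, K - 1)` expose the common
factor `N * (n + 1 - K)`, and what remains is `C(n, K - 1) < C(N - 1, K - 1)`: strict monotonicity
of `m ↦ C(m, K - 1)`, as `K ≥ 2` and `n < N - 1`.
-/

namespace Nat

theorem choose_succ_lt_choose_succ {n m k : ℕ} (hk : k ≤ n) (hnm : n < m) :
    n.choose (k + 1) < m.choose (k + 1) :=
  calc n.choose (k + 1) < n.choose k + n.choose (k + 1) := Nat.lt_add_of_pos_left (choose_pos hk)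
    _ = (n + 1).choose (k + 1) := (choose_succ_succ n k).symm
    _ ≤ m.choose (k + 1) := choose_le_choose _ hnm

theorem choose_mul_lt_mul_choose_add {n K T : ℕ} (hK : 2 ≤ K) (hKn : K ≤ n) (hT : 2 ≤ T) :
    n.choose K * (n + T) < (n + 1 - K) * (n + T).choose K := by
  obtain ⟨k, rfl⟩ : ∃ k, K = k + 1 := ⟨K - 1, by omega⟩
  have hlow : n.choose (k + 1) * (k + 1) = (n - k) * n.choose k := by
    rw [choose_succ_right_eq, Nat.mul_comm]
  have hup : (n + T).choose (k + 1) * (k + 1) = (n + T) * (n + T - 1).choose k := by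
    have := add_one_mul_choose_eq (n + T - 1) k
    rwa [Nat.sub_add_cancel (by omega), eq_comm] at this
  have hmono : n.choose k < (n + T - 1).choose k := by
    obtain ⟨j, rfl⟩ : ∃ j, k = j + 1 := ⟨k - 1, by omega⟩
    exact choose_succ_lt_choose_succ (by omega) (by omega)
  refine Nat.lt_of_mul_lt_mul_right (a := k + 1) ?_
  calc n.choose (k + 1) * (n + T) * (k + 1) = (n + T) * (n - k) * n.choose k := by
        rw [Nat.mul_right_comm, hlow]; ring
    _ < (n + T) * (n - k) * (n + T - 1).choose k :=
        Nat.mul_lt_mul_of_pos_left hmono (Nat.mul_pos (by omega) (by omega))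
    _ = (n + 1 - (k + 1)) * (n + T).choose (k + 1) * (k + 1) := by
        rw [Nat.mul_assoc _ _ (k + 1), hup, Nat.add_sub_add_right]; ring

end Nat

theorem stmt_11 (N K T : ℕ) (hK : 2 ≤ K) (hT : 2 ≤ T) (hTK : T + K ≤ N) :
    ((N : ℝ) - K - T + 1) / N > ((N - T).choose K : ℝ) / (N.choose K) := by
  obtain ⟨n, rfl⟩ : ∃ n, N = n + T := ⟨N - T, by omega⟩
  have hKn : K ≤ n := by omega
  have hnum : ((n + T : ℕ) : ℝ) - K - T + 1 = ((n + 1 - K : ℕ) : ℝ) := by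
    rw [Nat.cast_sub (by omega)]; push_cast; ring
  rw [Nat.add_sub_cancel, gt_iff_lt, hnum,
    div_lt_div_iff₀ (by exact_mod_cast Nat.choose_pos (by omega)) (by positivity)]
  exact_mod_cast Nat.choose_mul_lt_mul_choose_add hK hKn hT
end
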